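/- (The vector ν* − λ* is a subgradient of the per-sample total operating cost) Fix a realization vector y ∈ ℝ^T and a forecast vector ỹ⁰ ∈ ℝ^T. Suppose P^D(ỹ⁰) has an optimal solution and (χ*, λ*) is dual feasible for D^D(ỹ⁰) achieving the primal optimal value, and that for each τ = 1,…,T the problem P^R(ỹ⁰_τ, y_τ) has an optimal solution and (ι*_τ, ν*_τ) is dual feasible for D^R(ỹ⁰_τ, y_τ) achieving the primal optimal value. Then for every ỹ ∈ ℝ^T at which V(ỹ) is attained (P^D(ỹ) and all P^R(ỹ_τ, y_τ) have optimal solutions), V(ỹ) ≥ V(ỹ⁰) + Σ_{τ=1}^{T} (ν*_τ − λ*_τ)(ỹ_τ − ỹ⁰_τ); that is, the vector (ν*_τ − λ*_τ)_{τ=1}^{T} is a subgradient of V at ỹ⁰. -/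
import Mathlib


open Matrix BigOperators

/-- The vector `(ν*_τ − λ*_τ)_τ` is a subgradient at `ỹ⁰` of the per-sample
total operating cost `V(ỹ) = v^D(ỹ) + Σ_τ v^R(ỹ_τ, y_τ)`: whenever `V(ỹ)` is
attained by optimal solutions `x` of `P^D(ỹ)` and `z_τ` of `P^R(ỹ_τ, y_τ)`,
`V(ỹ) ≥ V(ỹ⁰) + Σ_τ (ν*_τ − λ*_τ)(ỹ_τ − ỹ⁰_τ)`. -/
theorem total_cost_subgradient
    (n p T m q : ℕ) (hT : 1 ≤ T)
    (A : Matrix (Fin p) (Fin n) ℝ) (b : Fin p → ℝ) (c : Fin n → ℝ)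
    (C : Matrix (Fin T) (Fin n) ℝ) (l : Fin T → ℝ)
    (AR : Matrix (Fin q) (Fin m) ℝ) (bR : Fin q → ℝ) (cR : Fin m → ℝ) (dR : Fin m → ℝ)
    (y ytil0 : Fin T → ℝ)
    (x0 : Fin n → ℝ) (chistar : Fin p → ℝ) (lamstar : Fin T → ℝ)
    (z0 : Fin T → Fin m → ℝ) (iotastar : Fin T → Fin q → ℝ) (nustar : Fin T → ℝ)
    -- x⁰ is an optimal solution of P^D(ỹ⁰)
    (hx0feas : A.mulVec x0 ≤ b ∧ C.mulVec x0 = l - ytil0)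
    (hx0opt : ∀ x : Fin n → ℝ, A.mulVec x ≤ b → C.mulVec x = l - ytil0 →
      c ⬝ᵥ x0 ≤ c ⬝ᵥ x)
    -- (χ*, λ*) is feasible for D^D(ỹ⁰) and achieves the primal optimal value
    (hdfeas : 0 ≤ chistar ∧ c + Aᵀ.mulVec chistar - Cᵀ.mulVec lamstar = 0)
    (hdval : c ⬝ᵥ x0 = -(b ⬝ᵥ chistar) + (l - ytil0) ⬝ᵥ lamstar)
    -- z⁰_τ is an optimal solution of P^R(ỹ⁰_τ, y_τ)
    (hz0feas : ∀ τ : Fin T, AR.mulVec (z0 τ) ≤ bR ∧ dR ⬝ᵥ z0 τ + y τ - ytil0 τ = 0)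
    (hz0opt : ∀ (τ : Fin T) (z : Fin m → ℝ), AR.mulVec z ≤ bR →
      dR ⬝ᵥ z + y τ - ytil0 τ = 0 → cR ⬝ᵥ z0 τ ≤ cR ⬝ᵥ z)
    -- (ι*_τ, ν*_τ) is feasible for D^R(ỹ⁰_τ, y_τ) and achieves the primal optimal value
    (hrdfeas : ∀ τ : Fin T, 0 ≤ iotastar τ ∧
      cR + ARᵀ.mulVec (iotastar τ) - nustar τ • dR = 0)
    (hrdval : ∀ τ : Fin T,
      cR ⬝ᵥ z0 τ = -(bR ⬝ᵥ iotastar τ) - nustar τ * (y τ - ytil0 τ)) :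
    -- for every forecast ỹ at which V(ỹ) is attained by optimal solutions x, z
    ∀ (ytil : Fin T → ℝ) (x : Fin n → ℝ) (z : Fin T → Fin m → ℝ),
      (A.mulVec x ≤ b ∧ C.mulVec x = l - ytil) →
      (∀ x' : Fin n → ℝ, A.mulVec x' ≤ b → C.mulVec x' = l - ytil →
        c ⬝ᵥ x ≤ c ⬝ᵥ x') →
      (∀ τ : Fin T, AR.mulVec (z τ) ≤ bR ∧ dR ⬝ᵥ z τ + y τ - ytil τ = 0) →
      (∀ (τ : Fin T) (z' : Fin m → ℝ), AR.mulVec z' ≤ bR →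
        dR ⬝ᵥ z' + y τ - ytil τ = 0 → cR ⬝ᵥ z τ ≤ cR ⬝ᵥ z') →
      c ⬝ᵥ x + ∑ τ : Fin T, cR ⬝ᵥ z τ ≥
        (c ⬝ᵥ x0 + ∑ τ : Fin T, cR ⬝ᵥ z0 τ)
          + ∑ τ : Fin T, (nustar τ - lamstar τ) * (ytil τ - ytil0 τ) := by
  intro ytil x z hxfeas _ hzfeas _
  -- weak duality for the day-ahead problem at ytil
  have hc : c = Cᵀ.mulVec lamstar - Aᵀ.mulVec chistar := by
    have h := hdfeas.2
    funext i
    have := congrFun h i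
    simp [Pi.add_apply, Pi.sub_apply] at this ⊢
    linarith
  have hdual : c ⬝ᵥ x ≥ -(b ⬝ᵥ chistar) + (l - ytil) ⬝ᵥ lamstar := by
    have h1 : c ⬝ᵥ x = lamstar ⬝ᵥ (C.mulVec x) - chistar ⬝ᵥ (A.mulVec x) := by
      rw [hc, sub_dotProduct, Matrix.mulVec_transpose, Matrix.mulVec_transpose,
        ← Matrix.dotProduct_mulVec, ← Matrix.dotProduct_mulVec]
    have h2 : chistar ⬝ᵥ (A.mulVec x) ≤ chistar ⬝ᵥ b := by
      apply Finset.sum_le_sum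
      intro i _
      exact mul_le_mul_of_nonneg_left (hxfeas.1 i) (hdfeas.1 i)
    rw [h1, hxfeas.2]
    have : (l - ytil) ⬝ᵥ lamstar = lamstar ⬝ᵥ (l - ytil) := dotProduct_comm _ _
    have hbc : b ⬝ᵥ chistar = chistar ⬝ᵥ b := dotProduct_comm _ _
    rw [this, hbc]
    linarith
  -- weak duality for each real-time problem at ytil τ
  have hrdual : ∀ τ : Fin T, cR ⬝ᵥ z τ ≥ -(bR ⬝ᵥ iotastar τ) - nustar τ * (y τ - ytil τ) := by
    intro τ
    have hcR : cR = nustar τ • dR - ARᵀ.mulVec (iotastar τ) := by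
      have h := (hrdfeas τ).2
      funext i
      have := congrFun h i
      simp [Pi.add_apply, Pi.sub_apply] at this ⊢
      linarith
    have h1 : cR ⬝ᵥ z τ = nustar τ * (dR ⬝ᵥ z τ) - iotastar τ ⬝ᵥ (AR.mulVec (z τ)) := by
      rw [hcR, sub_dotProduct, smul_dotProduct, Matrix.mulVec_transpose,
        ← Matrix.dotProduct_mulVec, smul_eq_mul]
    have h2 : iotastar τ ⬝ᵥ (AR.mulVec (z τ)) ≤ iotastar τ ⬝ᵥ bR := by
      apply Finset.sum_le_sum
      intro i _
      exact mul_le_mul_of_nonneg_left ((hzfeas τ).1 i) ((hrdfeas τ).1 i)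
    have h3 : dR ⬝ᵥ z τ = ytil τ - y τ := by
      have := (hzfeas τ).2
      linarith
    have hbc : bR ⬝ᵥ iotastar τ = iotastar τ ⬝ᵥ bR := dotProduct_comm _ _
    rw [h1, h3, hbc]
    nlinarith [h2]
  have hsum : ∑ τ : Fin T, cR ⬝ᵥ z τ ≥
      ∑ τ : Fin T, (-(bR ⬝ᵥ iotastar τ) - nustar τ * (y τ - ytil τ)) :=
    Finset.sum_le_sum (fun τ _ => hrdual τ)
  -- rewrite the right-hand side using dual values
  rw [hdval]
  have hz0 : ∑ τ : Fin T, cR ⬝ᵥ z0 τ =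
      ∑ τ : Fin T, (-(bR ⬝ᵥ iotastar τ) - nustar τ * (y τ - ytil0 τ)) :=
    Finset.sum_congr rfl (fun τ _ => hrdval τ)
  rw [hz0]
  have key : ∑ τ : Fin T, ((l τ - ytil0 τ) * lamstar τ
        + (-(bR ⬝ᵥ iotastar τ) - nustar τ * (y τ - ytil0 τ))
        + (nustar τ - lamstar τ) * (ytil τ - ytil0 τ))
      = ∑ τ : Fin T, ((l τ - ytil τ) * lamstar τ
        + (-(bR ⬝ᵥ iotastar τ) - nustar τ * (y τ - ytil τ))) :=
    Finset.sum_congr rfl (fun τ _ => by ring)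
  rw [Finset.sum_add_distrib, Finset.sum_add_distrib, Finset.sum_add_distrib] at key
  have e0 : (l - ytil0) ⬝ᵥ lamstar = ∑ τ : Fin T, (l τ - ytil0 τ) * lamstar τ := by
    simp [dotProduct]
  have e1 : (l - ytil) ⬝ᵥ lamstar = ∑ τ : Fin T, (l τ - ytil τ) * lamstar τ := by
    simp [dotProduct]
  rw [e1] at hdual
  linarith [hdual, hsum, key, e0]
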